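/- The form c(X,Y) = (1/4) Tr(ε[ε,X][ε,Y]) satisfies the Lie algebra 2-cocycle identity: c([X,Y],Z) + c([Y,Z],X) + c([Z,X],Y) = 0 for all bounded X, Y, Z with [ε,X], [ε,Y], [ε,Z] Hilbert–Schmidt. -/

import Mathlib

/-- Hilbert–Schmidt operators: `∑ ‖T e_i‖²` converges for every Hilbert basis. -/
def IsHilbertSchmidt {H : Type*} [NormedAddCommGroup H] [InnerProductSpace ℂ H]
    [CompleteSpace H] (T : H →L[ℂ] H) : Prop :=
  ∀ (ι : Type) (b : HilbertBasis ι ℂ H), Summable fun i => ‖T (b i)‖ ^ 2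

/-- The trace of an operator computed along a Hilbert basis `b`. -/
noncomputable def traceAlong {H : Type*} [NormedAddCommGroup H]
    [InnerProductSpace ℂ H] [CompleteSpace H] {ι : Type}
    (b : HilbertBasis ι ℂ H) (T : H →L[ℂ] H) : ℂ :=
  ∑' i, inner (𝕜 := ℂ) (b i) (T (b i))

/-- The cocycle `c(X,Y) = (1/4) Tr(ε[ε,X][ε,Y])`, trace along the basis `b`. -/
noncomputable def resCocycle {H : Type*} [NormedAddCommGroup H]
    [InnerProductSpace ℂ H] [CompleteSpace H] {ι : Type}
    (b : HilbertBasis ι ℂ H) (ε X Y : H →L[ℂ] H) : ℂ :=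
  (1 / 4 : ℂ) * traceAlong b (ε * (ε * X - X * ε) * (ε * Y - Y * ε))

/-!
Write `D U = εU - Uε`. Since `ε² = 1`, `ε` anticommutes with every `D U`, and `D` is a
derivation: `D (XY - YX) = (D X) Y + X (D Y) - (D Y) X - Y (D X)`. Expanding the three cocycle
terms this way gives twelve traces of the form `Tr(ε u V w)` or `Tr(ε V u w)` with `u`, `w`
Hilbert–Schmidt. Cyclicity of the trace on products of two Hilbert–Schmidt operators together
with the anticommutation gives `Tr(ε u V w) = -Tr(ε V w u)`, and the twelve terms cancel in six
pairs.
-/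

open ContinuousLinearMap
open scoped InnerProductSpace

lemma summable_norm_mul_norm_of_summable_sq {α E F : Type*} [SeminormedAddCommGroup E]
    [SeminormedAddCommGroup F] {f : α → E} {g : α → F}
    (hf : Summable fun i => ‖f i‖ ^ 2) (hg : Summable fun i => ‖g i‖ ^ 2) :
    Summable fun i => ‖f i‖ * ‖g i‖ :=
  ((hf.add hg).div_const 2).of_nonneg_of_le (fun i => by positivity) fun i => by
    nlinarith [sq_nonneg (‖f i‖ - ‖g i‖)]

namespace HilbertBasis

variable {𝕜 H ι : Type*} [RCLike 𝕜] [NormedAddCommGroup H] [InnerProductSpace 𝕜 H]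
  (b : HilbertBasis ι 𝕜 H)

lemma hasSum_norm_inner_sq (x : H) : HasSum (fun i => ‖⟪b i, x⟫_𝕜‖ ^ 2) (‖x‖ ^ 2) := by
  simpa [b.repr_apply_apply, b.repr.norm_map] using lp.hasSum_norm (p := 2) (by simp) (b.repr x)

def IsHilbertSchmidtAlong (T : H →L[𝕜] H) : Prop :=
  Summable fun i => ‖T (b i)‖ ^ 2

variable {b}

namespace IsHilbertSchmidtAlong

lemma summable_norm_inner_sq {T : H →L[𝕜] H} (hT : b.IsHilbertSchmidtAlong T) :
    Summable fun p : ι × ι => ‖⟪b p.1, T (b p.2)⟫_𝕜‖ ^ 2 := by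
  have hcols : Summable fun p : ι × ι => ‖⟪b p.2, T (b p.1)⟫_𝕜‖ ^ 2 :=
    (summable_prod_of_nonneg fun _ => by positivity).mpr
      ⟨fun j => (b.hasSum_norm_inner_sq (T (b j))).summable,
        hT.congr fun j => ((b.hasSum_norm_inner_sq (T (b j))).tsum_eq).symm⟩
  exact (Equiv.prodComm ι ι).summable_iff.mpr hcols

lemma mul_left (S : H →L[𝕜] H) {T : H →L[𝕜] H} (hT : b.IsHilbertSchmidtAlong T) :
    b.IsHilbertSchmidtAlong (S * T) :=
  (Summable.mul_left (‖S‖ ^ 2) hT).of_nonneg_of_le (fun _ => by positivity) fun i =>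
    calc ‖S (T (b i))‖ ^ 2 ≤ (‖S‖ * ‖T (b i)‖) ^ 2 := by gcongr; exact S.le_opNorm _
      _ = ‖S‖ ^ 2 * ‖T (b i)‖ ^ 2 := mul_pow _ _ _

variable [CompleteSpace H]

lemma adjoint {T : H →L[𝕜] H} (hT : b.IsHilbertSchmidtAlong T) :
    b.IsHilbertSchmidtAlong (ContinuousLinearMap.adjoint T) := by
  have hrows := ((summable_prod_of_nonneg fun _ => by positivity).mp
    hT.summable_norm_inner_sq).2
  refine hrows.congr fun i => ?_
  rw [← (b.hasSum_norm_inner_sq (ContinuousLinearMap.adjoint T (b i))).tsum_eq]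
  exact tsum_congr fun j => by rw [adjoint_inner_right, norm_inner_symm]

lemma mul_right (S : H →L[𝕜] H) {T : H →L[𝕜] H} (hT : b.IsHilbertSchmidtAlong T) :
    b.IsHilbertSchmidtAlong (T * S) := by
  simpa [← star_eq_adjoint, star_mul] using
    (hT.adjoint.mul_left (ContinuousLinearMap.adjoint S)).adjoint

end IsHilbertSchmidtAlong

end HilbertBasis

lemma mul_commutator_eq_neg_commutator_mul {R : Type*} [Ring R] {ε : R} (hε : ε * ε = 1)
    (U : R) : ε * (ε * U - U * ε) = -((ε * U - U * ε) * ε) := by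
  rw [eq_neg_iff_add_eq_zero]
  calc ε * (ε * U - U * ε) + (ε * U - U * ε) * ε = ε * ε * U - U * (ε * ε) := by noncomm_ring
    _ = 0 := by rw [hε, one_mul, mul_one, sub_self]

section Trace

variable {H : Type*} [NormedAddCommGroup H] [InnerProductSpace ℂ H] [CompleteSpace H]
  {ι : Type} {b : HilbertBasis ι ℂ H}

lemma summable_inner_mul_apply {A B : H →L[ℂ] H} (hA : b.IsHilbertSchmidtAlong A)
    (hB : b.IsHilbertSchmidtAlong B) : Summable fun i => ⟪b i, (A * B) (b i)⟫_ℂ :=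
  .of_norm_bounded (summable_norm_mul_norm_of_summable_sq hA.adjoint hB) fun i => by
    rw [mul_apply_eq_comp, ← adjoint_inner_left]
    exact norm_inner_le_norm _ _

lemma traceAlong_mul_eq_tsum_tsum (A B : H →L[ℂ] H) :
    traceAlong b (A * B) = ∑' i, ∑' j, ⟪b i, A (b j)⟫_ℂ * ⟪b j, B (b i)⟫_ℂ := by
  refine tsum_congr fun i => ?_
  rw [mul_apply_eq_comp, ← adjoint_inner_left, ← b.tsum_inner_mul_inner]
  exact tsum_congr fun j => by rw [adjoint_inner_left]

lemma traceAlong_mul_comm {A B : H →L[ℂ] H} (hA : b.IsHilbertSchmidtAlong A)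
    (hB : b.IsHilbertSchmidtAlong B) : traceAlong b (A * B) = traceAlong b (B * A) := by
  have hB' := (Equiv.prodComm ι ι).summable_iff.mpr hB.summable_norm_inner_sq
  have hsum : Summable (Function.uncurry fun i j => ⟪b i, A (b j)⟫_ℂ * ⟪b j, B (b i)⟫_ℂ) :=
    .of_norm <| (summable_norm_mul_norm_of_summable_sq hA.summable_norm_inner_sq hB').congr
      fun p => (norm_mul _ _).symm
  rw [traceAlong_mul_eq_tsum_tsum, traceAlong_mul_eq_tsum_tsum, ← hsum.tsum_comm]
  exact tsum_congr fun j => tsum_congr fun i => mul_comm _ _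

lemma traceAlong_neg (T : H →L[ℂ] H) : traceAlong b (-T) = -traceAlong b T := by
  simp only [traceAlong, neg_apply, inner_neg_right, tsum_neg]

lemma traceAlong_cycle_of_anticomm {ε u w : H →L[ℂ] H} (V : H →L[ℂ] H)
    (hu : b.IsHilbertSchmidtAlong u) (hw : b.IsHilbertSchmidtAlong w) (hεu : ε * u = -(u * ε)) :
    traceAlong b (ε * u * V * w) = -traceAlong b (ε * V * w * u) := by
  have h : ε * u * V * w = -(u * (ε * V * w)) := by
    simp only [hεu, neg_mul, mul_assoc]
  rw [h, traceAlong_neg, traceAlong_mul_comm hu (hw.mul_left (ε * V))]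

lemma traceAlong_leibniz (ε X Y : H →L[ℂ] H) {w : H →L[ℂ] H}
    (hX : b.IsHilbertSchmidtAlong (ε * X - X * ε)) (hY : b.IsHilbertSchmidtAlong (ε * Y - Y * ε))
    (hw : b.IsHilbertSchmidtAlong w) :
    traceAlong b (ε * (ε * (X * Y - Y * X) - (X * Y - Y * X) * ε) * w)
      = traceAlong b (ε * (ε * X - X * ε) * Y * w) + traceAlong b (ε * X * (ε * Y - Y * ε) * w)
        - traceAlong b (ε * (ε * Y - Y * ε) * X * w)
        - traceAlong b (ε * Y * (ε * X - X * ε) * w) := by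
  have h₁ := summable_inner_mul_apply ((hX.mul_left ε).mul_right Y) hw
  have h₂ := summable_inner_mul_apply (hY.mul_left (ε * X)) hw
  have h₃ := summable_inner_mul_apply ((hY.mul_left ε).mul_right X) hw
  have h₄ := summable_inner_mul_apply (hX.mul_left (ε * Y)) hw
  have h : ε * (ε * (X * Y - Y * X) - (X * Y - Y * X) * ε) * w
      = ε * (ε * X - X * ε) * Y * w + ε * X * (ε * Y - Y * ε) * w
        - ε * (ε * Y - Y * ε) * X * w - ε * Y * (ε * X - X * ε) * w := by
    noncomm_ring
  simp only [h, traceAlong, add_apply, sub_apply, inner_add_right, inner_sub_right]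
  rw [((h₁.add h₂).sub h₃).tsum_sub h₄, (h₁.add h₂).tsum_sub h₃, h₁.tsum_add h₂]

end Trace

theorem stmt8_general {H : Type*} [NormedAddCommGroup H] [InnerProductSpace ℂ H]
    [CompleteSpace H] {ι : Type} (b : HilbertBasis ι ℂ H)
    (ε X Y Z : H →L[ℂ] H) (hinv : ε * ε = 1)
    (hX : IsHilbertSchmidt (ε * X - X * ε))
    (hY : IsHilbertSchmidt (ε * Y - Y * ε))
    (hZ : IsHilbertSchmidt (ε * Z - Z * ε)) :
    resCocycle b ε (X * Y - Y * X) Z + resCocycle b ε (Y * Z - Z * Y) X +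
      resCocycle b ε (Z * X - X * Z) Y = 0 := by
  have hX' := hX ι b
  have hY' := hY ι b
  have hZ' := hZ ι b
  have hεX := mul_commutator_eq_neg_commutator_mul hinv X
  have hεY := mul_commutator_eq_neg_commutator_mul hinv Y
  have hεZ := mul_commutator_eq_neg_commutator_mul hinv Z
  simp only [resCocycle, traceAlong_leibniz ε X Y hX' hY' hZ',
    traceAlong_leibniz ε Y Z hY' hZ' hX', traceAlong_leibniz ε Z X hZ' hX' hY',
    traceAlong_cycle_of_anticomm Y hX' hZ' hεX, traceAlong_cycle_of_anticomm Z hY' hX' hεY,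
    traceAlong_cycle_of_anticomm X hZ' hY' hεZ, traceAlong_cycle_of_anticomm X hY' hZ' hεY,
    traceAlong_cycle_of_anticomm Y hZ' hX' hεZ, traceAlong_cycle_of_anticomm Z hX' hY' hεX]
  ring

/-- `c(X,Y) = (1/4) Tr(ε[ε,X][ε,Y])` satisfies the Lie algebra
2-cocycle identity `c([X,Y],Z) + c([Y,Z],X) + c([Z,X],Y) = 0` for bounded `X, Y, Z`
with Hilbert–Schmidt commutators with `ε`. -/
theorem stmt8 {H : Type*} [NormedAddCommGroup H] [InnerProductSpace ℂ H]
    [CompleteSpace H] {ι : Type} (b : HilbertBasis ι ℂ H)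
    (ε X Y Z : H →L[ℂ] H) (hsa : IsSelfAdjoint ε) (hinv : ε * ε = 1)
    (hX : IsHilbertSchmidt (ε * X - X * ε))
    (hY : IsHilbertSchmidt (ε * Y - Y * ε))
    (hZ : IsHilbertSchmidt (ε * Z - Z * ε)) :
    resCocycle b ε (X * Y - Y * X) Z + resCocycle b ε (Y * Z - Z * Y) X +
      resCocycle b ε (Z * X - X * Z) Y = 0 :=
  stmt8_general b ε X Y Z hinv hX hY hZ
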